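/- For every ε with 0 < ε < 4⁻¹e⁻², the Lebesgue measure of Δ_ε in ℝ³ equals 4ε. -/

import Mathlib

/-! For `(x₁, x₂)` in the shell `a < |xᵢ| < b`, the fibre of `Δ_ε` over `(x₁, x₂)` is the interval
`0 < y < ε / (|x₁| |x₂|)`: the constraint `y < 1` is inactive because `|x₁| |x₂| > a² ≥ ε`.
Hence the volume is `ε (∫_{a<|x|<b} dx / |x|)² = ε (2 log (b / a))²`, which is `4ε` for
`a = 1/(2e)`, `b = 1/2`. -/

open Filter MeasureTheory Matrix Set

open scoped ENNReal

/-- `Δ_ε = {(y,x₁,x₂) : 0 < y < 1, 1/(2e) < |x₁| < 1/2, 1/(2e) < |x₂| < 1/2, y|x₁||x₂| < ε}`. -/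
noncomputable def Delta (ε : ℝ) : Set (Fin 3 → ℝ) :=
  {w | 0 < w 0 ∧ w 0 < 1 ∧ 1 / (2 * Real.exp 1) < |w 1| ∧ |w 1| < 1 / 2 ∧
    1 / (2 * Real.exp 1) < |w 2| ∧ |w 2| < 1 / 2 ∧ w 0 * |w 1| * |w 2| < ε}

theorem lintegral_comp_abs (f : ℝ → ℝ≥0∞) :
    ∫⁻ x, f |x| = 2 * ∫⁻ x in Ioi 0, f x := by
  have h_pos : ∫⁻ x in Ioi 0, f |x| = ∫⁻ x in Ioi 0, f x :=
    setLIntegral_congr_fun measurableSet_Ioi fun x hx => by rw [abs_of_pos hx]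
  have h_neg : ∫⁻ x in Iic 0, f |x| = ∫⁻ x in Ioi 0, f x := by
    have h_reflect := (Measure.measurePreserving_neg (volume : Measure ℝ))
      |>.setLIntegral_comp_preimage_emb (Homeomorph.neg ℝ).measurableEmbedding f (Ici 0)
    rw [neg_preimage, neg_Ici, neg_zero] at h_reflect
    rw [restrict_Ioi_eq_restrict_Ici, ← h_reflect]
    exact setLIntegral_congr_fun measurableSet_Iic fun x hx => by rw [abs_of_nonpos hx]
  rw [← lintegral_add_compl _ measurableSet_Ioi, compl_Ioi, h_pos, h_neg, two_mul]

theorem setLIntegral_Ioo_ofReal_inv {a b : ℝ} (ha : 0 < a) (hab : a ≤ b) :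
    ∫⁻ x in Ioo a b, ENNReal.ofReal x⁻¹ = ENNReal.ofReal (Real.log (b / a)) := by
  have h_int : IntegrableOn (fun x : ℝ => x⁻¹) (Ioc a b) :=
    (intervalIntegrable_inv_iff.2 (Or.inr (by simp [uIcc_of_le hab, ha.not_ge]))).1
  rw [restrict_Ioo_eq_restrict_Ioc, ← integral_inv_of_pos ha (ha.trans_le hab),
    intervalIntegral.integral_of_le hab, ofReal_integral_eq_lintegral_ofReal h_int]
  filter_upwards [self_mem_ae_restrict measurableSet_Ioc] with x hx
  exact inv_nonneg.2 (ha.trans hx.1).le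

theorem setLIntegral_abs_preimage_Ioo_ofReal_inv_abs {a b : ℝ} (ha : 0 < a) (hab : a ≤ b) :
    ∫⁻ x in (|·|) ⁻¹' Ioo a b, ENNReal.ofReal |x|⁻¹ = 2 * ENNReal.ofReal (Real.log (b / a)) := by
  have h_indicator : ((|·|) ⁻¹' Ioo a b).indicator (fun x : ℝ => ENNReal.ofReal |x|⁻¹)
      = fun x => (Ioo a b).indicator (fun t => ENNReal.ofReal t⁻¹) |x| :=
    funext fun _ => indicator_comp_right (g := fun t : ℝ => ENNReal.ofReal t⁻¹) (|·|)
  rw [← lintegral_indicator (measurableSet_Ioo.preimage measurable_abs), h_indicator,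
    lintegral_comp_abs, setLIntegral_indicator measurableSet_Ioo,
    inter_eq_left.2 (Ioo_subset_Ioi_self.trans (Ioi_subset_Ioi ha.le)),
    setLIntegral_Ioo_ofReal_inv ha hab]

theorem volume_preserving_finThreeArrow (α : Type*) [MeasureSpace α]
    [SigmaFinite (volume : Measure α)] :
    MeasurePreserving (fun w : Fin 3 → α => (w 0, (w 1, w 2))) volume volume :=
  ((MeasurePreserving.id volume).prod (volume_preserving_finTwoArrow α)).comp
    (volume_preserving_piFinSuccAbove (fun _ => α) 0)

theorem Ioo_zero_one_inter_setOf_mul_lt {c ε : ℝ} (hc : 0 < c) (hεc : ε ≤ c) :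
    Ioo 0 1 ∩ {y | y * c < ε} = Ioo 0 (ε / c) := by
  ext y
  simp only [mem_inter_iff, mem_Ioo, mem_ofPred_eq, lt_div_iff₀ hc]
  constructor
  · rintro ⟨⟨hy0, -⟩, hyε⟩
    exact ⟨hy0, hyε⟩
  · rintro ⟨hy0, hyε⟩
    exact ⟨⟨hy0, lt_of_mul_lt_mul_right (by linarith) hc.le⟩, hyε⟩

section Fibres

variable {β : Type*} {s : Set β} {c : β → ℝ}

theorem measurableSet_setOf_mem_Ioo_mul_lt [MeasurableSpace β] (hs : MeasurableSet s)
    (hc : Measurable c) (ε : ℝ) :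
    MeasurableSet {p : ℝ × β | p.2 ∈ s ∧ p.1 ∈ Ioo 0 1 ∩ {y | y * c p.2 < ε}} :=
  (hs.preimage measurable_snd).inter ((measurableSet_Ioo.preimage measurable_fst).inter
    (measurableSet_lt (measurable_fst.mul (hc.comp measurable_snd)) measurable_const))

theorem volume_setOf_mem_Ioo_mul_lt [MeasureSpace β] [SFinite (volume : Measure β)]
    (hs : MeasurableSet s) (hc : Measurable c) {ε : ℝ} (hεc : ∀ q ∈ s, 0 < c q ∧ ε ≤ c q) :
    volume {p : ℝ × β | p.2 ∈ s ∧ p.1 ∈ Ioo 0 1 ∩ {y | y * c p.2 < ε}}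
      = ∫⁻ q in s, ENNReal.ofReal (ε / c q) := by
  rw [Measure.volume_eq_prod, Measure.prod_apply_symm (measurableSet_setOf_mem_Ioo_mul_lt hs hc ε),
    ← lintegral_indicator hs]
  congr with q
  by_cases hq : q ∈ s
  · have h_fibre : (fun y => (y, q)) ⁻¹' {p : ℝ × β | p.2 ∈ s ∧ p.1 ∈ Ioo 0 1 ∩ {y | y * c p.2 < ε}}
        = Ioo 0 1 ∩ {y | y * c q < ε} := by
      ext y; simp [hq]
    rw [indicator_of_mem hq, h_fibre, Ioo_zero_one_inter_setOf_mul_lt (hεc q hq).1 (hεc q hq).2,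
      Real.volume_Ioo, sub_zero]
  · simp [hq]

end Fibres

theorem volume_setOf_mul_abs_mul_abs_lt {a b ε : ℝ} (ha : 0 < a) (hab : a ≤ b) (hεa : ε ≤ a ^ 2) :
    volume {w : Fin 3 → ℝ | 0 < w 0 ∧ w 0 < 1 ∧ a < |w 1| ∧ |w 1| < b ∧ a < |w 2| ∧ |w 2| < b ∧
        w 0 * |w 1| * |w 2| < ε}
      = ENNReal.ofReal ε * (2 * ENNReal.ofReal (Real.log (b / a))) ^ 2 := by
  set S : Set ℝ := (|·|) ⁻¹' Ioo a b
  have hS : MeasurableSet S := measurableSet_Ioo.preimage measurable_abs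
  have hc : Measurable fun q : ℝ × ℝ => |q.1| * |q.2| := by fun_prop
  have h_set : {w : Fin 3 → ℝ | 0 < w 0 ∧ w 0 < 1 ∧ a < |w 1| ∧ |w 1| < b ∧ a < |w 2| ∧
        |w 2| < b ∧ w 0 * |w 1| * |w 2| < ε}
      = (fun w => (w 0, (w 1, w 2))) ⁻¹'
        {p : ℝ × (ℝ × ℝ) | p.2 ∈ S ×ˢ S ∧ p.1 ∈ Ioo 0 1 ∩ {y | y * (|p.2.1| * |p.2.2|) < ε}} := by
    ext w
    simp only [S, mem_ofPred_eq, mem_preimage, mem_prod, mem_Ioo, mem_inter_iff, mul_assoc]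
    tauto
  have h_bound : ∀ q ∈ S ×ˢ S, 0 < |q.1| * |q.2| ∧ ε ≤ |q.1| * |q.2| := by
    rintro q ⟨⟨h₁, -⟩, ⟨h₂, -⟩⟩
    refine ⟨mul_pos (ha.trans h₁) (ha.trans h₂), hεa.trans ?_⟩
    rw [sq]
    exact mul_le_mul h₁.le h₂.le ha.le (ha.trans h₁).le
  have h_split : ∀ q : ℝ × ℝ, ENNReal.ofReal (ε / (|q.1| * |q.2|))
      = ENNReal.ofReal ε * (ENNReal.ofReal |q.1|⁻¹ * ENNReal.ofReal |q.2|⁻¹) := by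
    intro q
    rw [← ENNReal.ofReal_mul (by positivity), ← ENNReal.ofReal_mul' (by positivity),
      div_eq_mul_inv, mul_inv]
  rw [h_set, (volume_preserving_finThreeArrow ℝ).measure_preimage
      (measurableSet_setOf_mem_Ioo_mul_lt (hS.prod hS) hc ε).nullMeasurableSet,
    volume_setOf_mem_Ioo_mul_lt (hS.prod hS) hc h_bound]
  simp_rw [h_split]
  rw [lintegral_const_mul _ (by fun_prop), Measure.volume_eq_prod, ← Measure.prod_restrict,
    lintegral_prod_mul (f := fun x => ENNReal.ofReal |x|⁻¹) (g := fun x => ENNReal.ofReal |x|⁻¹)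
      (by fun_prop) (by fun_prop), setLIntegral_abs_preimage_Ioo_ofReal_inv_abs ha hab, sq]

theorem stmt12_general (ε : ℝ) (hε1 : ε < 4⁻¹ * Real.exp (-2)) :
    volume (Delta ε) = ENNReal.ofReal (4 * ε) := by
  have h_sq : (1 / (2 * Real.exp 1)) ^ 2 = 4⁻¹ * Real.exp (-2) := by
    rw [div_pow, one_pow, one_div, mul_pow, mul_inv, ← Real.exp_nat_mul, Real.exp_neg]
    norm_num
  have h_log : Real.log (1 / 2 / (1 / (2 * Real.exp 1))) = 1 := by
    rw [show (1 / 2 / (1 / (2 * Real.exp 1)) : ℝ) = Real.exp 1 by field_simp, Real.log_exp]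
  have h_le : 1 / (2 * Real.exp 1) ≤ 1 / 2 := one_div_le_one_div_of_le two_pos
    (le_mul_of_one_le_right zero_le_two (Real.one_le_exp zero_le_one))
  rw [Delta, volume_setOf_mul_abs_mul_abs_lt (by positivity) h_le (h_sq ▸ hε1.le), h_log,
    ENNReal.ofReal_one, ENNReal.ofReal_mul zero_le_four, mul_comm]
  norm_num

theorem stmt12 (ε : ℝ) (hε0 : 0 < ε) (hε1 : ε < 4⁻¹ * Real.exp (-2)) :
    volume (Delta ε) = ENNReal.ofReal (4 * ε) :=
  stmt12_general ε hε1
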